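/- Let G be a non-simple loop-free multigraph, minimal under admissible double edge swaps, with maximal non-simple edge {u1,u2}, u1 > u2. If G contains at least one edge between two small vertices, then every small vertex adjacent to u2 is adjacent to some small vertex. -/
import Mathlib


open Finset

/-- A loopy multigraph on vertex set `V`: each unordered pair (possibly a loop)
has a multiplicity. -/
abbrev Multigraph (V : Type*) := Sym2 V → ℕ

variable {V : Type*}

/-- The degree of a vertex: each incident edge counts with multiplicity,
and a loop counts twice. -/
def mdeg [Fintype V] (G : Multigraph V) (v : V) : ℕ :=
  (∑ u : V, G s(v, u)) + G s(v, v)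

/-- A multigraph is simple if it has no loops and every multiplicity is at most one. -/
def IsSimpleMG (G : Multigraph V) : Prop :=
  (∀ v : V, G s(v, v) = 0) ∧ ∀ e : Sym2 V, G e ≤ 1

/-- A multigraph is loop-free if it has no loops. -/
def LoopFree (G : Multigraph V) : Prop := ∀ v : V, G s(v, v) = 0

/-- A degree function is graphical if it is realized by some simple graph. -/
def GraphicalDeg [Fintype V] (d : V → ℕ) : Prop :=
  ∃ H : Multigraph V, IsSimpleMG H ∧ ∀ v : V, mdeg H v = d v

/-- The result of the double edge swap removing one copy each of `{v1,v2}` and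
`{v3,v4}` and adding one copy each of `{v2,v3}` and `{v4,v1}`. -/
def swapped [DecidableEq V] (G : Multigraph V) (v1 v2 v3 v4 : V) : Multigraph V :=
  fun e => G e - (if e = s(v1, v2) then 1 else 0) - (if e = s(v3, v4) then 1 else 0)
    + (if e = s(v2, v3) then 1 else 0) + (if e = s(v4, v1) then 1 else 0)

/-- The edges `{v1,v2}` and `{v3,v4}` share no vertex. -/
def NotIncident (v1 v2 v3 v4 : V) : Prop :=
  v1 ≠ v3 ∧ v1 ≠ v4 ∧ v2 ≠ v3 ∧ v2 ≠ v4

/-- One admissible double edge swap: the two removed edges exist, are not incident,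
and at least one of them is a loop or has multiplicity at least two. -/
def AdmissibleStep [DecidableEq V] (G G' : Multigraph V) : Prop :=
  ∃ v1 v2 v3 v4 : V, NotIncident v1 v2 v3 v4 ∧
    1 ≤ G s(v1, v2) ∧ 1 ≤ G s(v3, v4) ∧
    (v1 = v2 ∨ v3 = v4 ∨ 2 ≤ G s(v1, v2) ∨ 2 ≤ G s(v3, v4)) ∧
    G' = swapped G v1 v2 v3 v4

/-- The larger endpoint of an unordered pair. -/
def pmax [LinearOrder V] (p : Sym2 V) : V :=
  Sym2.lift ⟨fun a b => max a b, fun a b => max_comm a b⟩ p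

/-- The smaller endpoint of an unordered pair. -/
def pmin [LinearOrder V] (p : Sym2 V) : V :=
  Sym2.lift ⟨fun a b => min a b, fun a b => min_comm a b⟩ p

/-- Order on unordered pairs: compare larger endpoints, then smaller endpoints. -/
def PairLT [LinearOrder V] (p q : Sym2 V) : Prop :=
  pmax p < pmax q ∨ (pmax p = pmax q ∧ pmin p < pmin q)

def PairLE [LinearOrder V] (p q : Sym2 V) : Prop := p = q ∨ PairLT p q

/-- The pair `p` carries a non-simple edge of `G`: a multiple edge or a loop. -/
def NonSimpleAt (G : Multigraph V) (p : Sym2 V) : Prop :=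
  2 ≤ G p ∨ (p.IsDiag ∧ 1 ≤ G p)

/-- `p` is the maximal non-simple edge of `G`. -/
def MaxNonSimple [LinearOrder V] (G : Multigraph V) (p : Sym2 V) : Prop :=
  NonSimpleAt G p ∧ ∀ q : Sym2 V, NonSimpleAt G q → PairLE q p

/-- The strict partial order on multigraphs with fixed degrees: `G < H` iff `H` is
non-simple and its maximal non-simple edge is larger than all non-simple edges of `G`,
or the maximal non-simple edges agree but have strictly larger multiplicity in `H`. -/
def GraphLT [LinearOrder V] (G H : Multigraph V) : Prop :=
  ∃ p : Sym2 V, MaxNonSimple H p ∧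
    ((∀ q : Sym2 V, NonSimpleAt G q → PairLT q p) ∨ (MaxNonSimple G p ∧ G p < H p))


/-! ### Auxiliary lemmas for the proof -/

section Aux

variable {V : Type*}

private lemma sym2_ne {a b c d : V} (h1 : a = c → b = d → False)
    (h2 : a = d → b = c → False) : s(a, b) ≠ s(c, d) := by
  intro h
  rcases Sym2.eq_iff.mp h with ⟨ha, hb⟩ | ⟨ha, hb⟩
  exacts [h1 ha hb, h2 ha hb]

private lemma pmax_mk [LinearOrder V] (a b : V) : pmax s(a, b) = max a b := rfl

private lemma pmin_mk [LinearOrder V] (a b : V) : pmin s(a, b) = min a b := rfl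

private lemma nonsimple_mono {G G' : Multigraph V} {q : Sym2 V} (h : G' q ≤ G q) :
    NonSimpleAt G' q → NonSimpleAt G q := by
  rintro (h2 | ⟨hd, h1⟩)
  · exact Or.inl (le_trans h2 h)
  · exact Or.inr ⟨hd, le_trans h1 h⟩

private lemma not_nonsimple_one {G : Multigraph V} {q : Sym2 V} (h1 : G q = 1)
    (hd : ¬ q.IsDiag) : ¬ NonSimpleAt G q := by
  rintro (h | ⟨hdd, _⟩)
  · omega
  · exact hd hdd

variable [LinearOrder V]

private lemma two_le_mult {G : Multigraph V} {u1 u2 : V} (hmax : MaxNonSimple G s(u1, u2))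
    (hu : u2 < u1) : 2 ≤ G s(u1, u2) := by
  rcases hmax.1 with h | ⟨hd, _⟩
  · exact h
  · exact absurd (Sym2.mk_isDiag_iff.mp hd) hu.ne'

private lemma pairlt_small {u1 u2 : V} (hu : u2 < u1) {x y : V} (hx : x < u1) (hy : y < u1) :
    PairLT s(x, y) s(u1, u2) := by
  left
  rw [pmax_mk, pmax_mk, max_eq_left hu.le]
  exact max_lt hx hy

private lemma pairlt_pin {u1 u2 : V} (hu : u2 < u1) {y : V} (hy : y < u2) :
    PairLT s(u1, y) s(u1, u2) := by
  right
  constructor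
  · rw [pmax_mk, pmax_mk, max_eq_left hu.le, max_eq_left (hy.trans hu).le]
  · rw [pmin_mk, pmin_mk, min_eq_right hu.le, min_eq_right (hy.trans hu).le]
    exact hy

private lemma cap_big {G : Multigraph V} {u1 u2 : V} (hmax : MaxNonSimple G s(u1, u2))
    (hu : u2 < u1) {x y : V} (h : u1 < max x y) : G s(x, y) ≤ 1 := by
  by_contra hc
  have hle := hmax.2 s(x, y) (Or.inl (by omega))
  have e2 : pmax s(u1, u2) = u1 := by rw [pmax_mk]; exact max_eq_left hu.le
  rcases hle with he | hlt
  · have : pmax s(x, y) = u1 := by rw [he, e2]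
    rw [pmax_mk] at this
    rw [this] at h
    exact lt_irrefl _ h
  · rcases hlt with h1 | ⟨h1, _⟩
    · rw [pmax_mk, e2] at h1
      exact absurd h1 (not_lt.mpr h.le)
    · rw [pmax_mk, e2] at h1
      rw [h1] at h
      exact lt_irrefl _ h

private lemma cap_mid {G : Multigraph V} {u1 u2 : V} (hmax : MaxNonSimple G s(u1, u2))
    (hu : u2 < u1) {x : V} (hx2 : u2 < x) (hx1 : x < u1) : G s(x, u1) ≤ 1 := by
  by_contra hc
  have hle := hmax.2 s(x, u1) (Or.inl (by omega))
  rcases hle with he | hlt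
  · rcases Sym2.eq_iff.mp he with ⟨h1, _⟩ | ⟨h1, _⟩
    · exact absurd h1 hx1.ne
    · exact absurd h1 hx2.ne'
  · have e1 : pmax s(x, u1) = u1 := by rw [pmax_mk]; exact max_eq_right hx1.le
    have e2 : pmax s(u1, u2) = u1 := by rw [pmax_mk]; exact max_eq_left hu.le
    have e3 : pmin s(x, u1) = x := by rw [pmin_mk]; exact min_eq_left hx1.le
    have e4 : pmin s(u1, u2) = u2 := by rw [pmin_mk]; exact min_eq_right hu.le
    rcases hlt with h1 | ⟨_, h1⟩
    · rw [e1, e2] at h1; exact lt_irrefl _ h1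
    · rw [e3, e4] at h1; exact absurd h1 (not_lt.mpr hx2.le)

private lemma graphLT_of {G G' : Multigraph V} {p : Sym2 V} (hmaxp : MaxNonSimple G p)
    (hpnd : ¬ p.IsDiag) (hdec : G' p + 1 = G p)
    (hother : ∀ q, q ≠ p → NonSimpleAt G' q → PairLT q p) : GraphLT G' G := by
  have h2 : 2 ≤ G p := by
    rcases hmaxp.1 with h | ⟨hd, _⟩
    · exact h
    · exact absurd hd hpnd
  refine ⟨p, hmaxp, ?_⟩
  rcases Nat.lt_or_ge (G p) 3 with h3 | h3
  · left
    intro q hq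
    by_cases hqp : q = p
    · subst hqp
      rcases hq with h | ⟨hd, _⟩
      · omega
      · exact absurd hd hpnd
    · exact hother q hqp hq
  · right
    refine ⟨⟨Or.inl (by omega), fun q hq => ?_⟩, by omega⟩
    by_cases hqp : q = p
    · exact Or.inl hqp
    · exact Or.inr (hother q hqp hq)

/-- The single-swap minimality argument: if an edge `{x,y}` disjoint from `{u1,u2}`
satisfies the two side conditions, then swapping it against `{u1,u2}` yields a
strictly smaller graph, contradicting minimality. -/
private lemma key [Fintype V] {G : Multigraph V}
    (hmin : ∀ G' : Multigraph V, Relation.ReflTransGen AdmissibleStep G G' → ¬ GraphLT G' G)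
    {u1 u2 : V} (hmax : MaxNonSimple G s(u1, u2)) (hu : u2 < u1)
    {x y : V} (hx1 : x ≠ u1) (hx2 : x ≠ u2) (hy1 : y ≠ u1) (hy2 : y ≠ u2)
    (hxy : x ≠ y) (he : 1 ≤ G s(x, y))
    (hC1 : x < u1 ∨ G s(u2, x) = 0) (hC2 : y < u2 ∨ G s(u1, y) = 0) : False := by
  classical
  have h2 : 2 ≤ G s(u1, u2) := two_le_mult hmax hu
  set G' := swapped G u1 u2 x y with hG'
  have ev : ∀ e, G' e = G e - (if e = s(u1, u2) then 1 else 0)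
      - (if e = s(x, y) then 1 else 0) + (if e = s(u2, x) then 1 else 0)
      + (if e = s(y, u1) then 1 else 0) := fun _ => rfl
  have np2 : s(u1, u2) ≠ s(x, y) := sym2_ne (fun h _ => hx1 h.symm) (fun h _ => hy1 h.symm)
  have np3 : s(u1, u2) ≠ s(u2, x) := sym2_ne (fun h _ => hu.ne' h) (fun h _ => hx1 h.symm)
  have np4 : s(u1, u2) ≠ s(y, u1) := sym2_ne (fun h _ => hy1 h.symm) (fun _ h => hy2 h.symm)
  have n23 : s(x, y) ≠ s(u2, x) := sym2_ne (fun h _ => hx2 h) (fun _ h => hy2 h)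
  have n24 : s(x, y) ≠ s(y, u1) := sym2_ne (fun h _ => hxy h) (fun h _ => hx1 h)
  have n34 : s(u2, x) ≠ s(y, u1) := sym2_ne (fun h _ => hy2 h.symm) (fun h _ => hu.ne h)
  have hstep : AdmissibleStep G G' :=
    ⟨u1, u2, x, y, ⟨hx1.symm, hy1.symm, hx2.symm, hy2.symm⟩, by omega, he,
      Or.inr (Or.inr (Or.inl h2)), rfl⟩
  have hdp : G' s(u1, u2) + 1 = G s(u1, u2) := by
    have h := ev s(u1, u2)
    rw [if_pos rfl, if_neg np2, if_neg np3, if_neg np4] at h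
    omega
  have hother : ∀ q, q ≠ s(u1, u2) → NonSimpleAt G' q → PairLT q s(u1, u2) := by
    intro q hqp hns
    by_cases h2q : q = s(x, y)
    · subst h2q
      have hval : G' s(x, y) ≤ G s(x, y) := by
        have h := ev s(x, y)
        rw [if_neg hqp, if_pos rfl, if_neg n23, if_neg n24] at h
        omega
      rcases hmax.2 _ (nonsimple_mono hval hns) with h | h
      · exact absurd h hqp
      · exact h
    by_cases h3q : q = s(u2, x)
    · subst h3q
      rcases hC1 with hx | hx
      · exact pairlt_small hu hu hx
      · exfalso
        have hval : G' s(u2, x) = 1 := by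
          have h := ev s(u2, x)
          rw [if_neg hqp, if_neg (Ne.symm n23), if_pos rfl, if_neg n34] at h
          omega
        exact not_nonsimple_one hval
          (by rw [Sym2.mk_isDiag_iff]; exact fun h => hx2 h.symm) hns
    by_cases h4q : q = s(y, u1)
    · subst h4q
      rcases hC2 with hy | hy
      · have hswap : s(y, u1) = s(u1, y) := Sym2.eq_swap
        rw [hswap]
        exact pairlt_pin hu hy
      · exfalso
        have hval : G' s(y, u1) = 1 := by
          have h := ev s(y, u1)
          rw [if_neg hqp, if_neg (Ne.symm n24), if_neg (Ne.symm n34), if_pos rfl] at h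
          have hy' : G s(y, u1) = 0 := by rw [Sym2.eq_swap]; exact hy
          omega
        exact not_nonsimple_one hval
          (by rw [Sym2.mk_isDiag_iff]; exact fun h => hy1 h) hns
    · have hval : G' q = G q := by
        have h := ev q
        rw [if_neg hqp, if_neg h2q, if_neg h3q, if_neg h4q] at h
        omega
      rcases hmax.2 _ (nonsimple_mono (le_of_eq hval) hns) with h | h
      · exact absurd h hqp
      · exact h
  exact hmin G' (Relation.ReflTransGen.single hstep)
    (graphLT_of hmax (by rw [Sym2.mk_isDiag_iff]; exact hu.ne') hdp hother)

/-- The two-swap minimality argument used when both endpoints of the small edge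
`{a,b}` are above `u2` and adjacent to `u1`. -/
private lemma key2 [Fintype V] {G : Multigraph V}
    (hmin : ∀ G' : Multigraph V, Relation.ReflTransGen AdmissibleStep G G' → ¬ GraphLT G' G)
    {u1 u2 : V} (hmax : MaxNonSimple G s(u1, u2)) (hu : u2 < u1)
    {a b c : V} (ha1 : a ≠ u1) (ha2 : a ≠ u2) (hb1 : b ≠ u1) (hb2 : b ≠ u2)
    (hc1 : c ≠ u1) (hc2' : c ≠ u2) (hasm : a < u1) (hbsm : b < u1)
    (hab : a ≠ b) (hca : c ≠ a) (hcb : c ≠ b)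
    (heab : 1 ≤ G s(a, b)) (hecu2 : 1 ≤ G s(c, u2)) (hbu1 : 1 ≤ G s(b, u1))
    (hCc : c < u2 ∨ G s(u1, c) = 0) : False := by
  classical
  have h2 : 2 ≤ G s(u1, u2) := two_le_mult hmax hu
  set G1 := swapped G u1 u2 a b with hG1def
  set G2 := swapped G1 b u1 c u2 with hG2def
  have ev1 : ∀ e, G1 e = G e - (if e = s(u1, u2) then 1 else 0)
      - (if e = s(a, b) then 1 else 0) + (if e = s(u2, a) then 1 else 0)
      + (if e = s(b, u1) then 1 else 0) := fun _ => rfl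
  have ev2 : ∀ e, G2 e = G1 e - (if e = s(b, u1) then 1 else 0)
      - (if e = s(c, u2) then 1 else 0) + (if e = s(u1, c) then 1 else 0)
      + (if e = s(u2, b) then 1 else 0) := fun _ => rfl
  -- disequalities between the seven relevant pairs
  have np2 : s(u1, u2) ≠ s(a, b) := sym2_ne (fun h _ => ha1 h.symm) (fun h _ => hb1 h.symm)
  have np3 : s(u1, u2) ≠ s(u2, a) := sym2_ne (fun h _ => hu.ne' h) (fun h _ => ha1 h.symm)
  have np4 : s(u1, u2) ≠ s(b, u1) := sym2_ne (fun h _ => hb1 h.symm) (fun _ h => hb2 h.symm)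
  have np5 : s(u1, u2) ≠ s(c, u2) := sym2_ne (fun h _ => hc1 h.symm) (fun h _ => hu.ne' h)
  have np6 : s(u1, u2) ≠ s(u1, c) := sym2_ne (fun _ h => hc2' h.symm) (fun h _ => hc1 h.symm)
  have np7 : s(u1, u2) ≠ s(u2, b) := sym2_ne (fun h _ => hu.ne' h) (fun h _ => hb1 h.symm)
  have n23 : s(a, b) ≠ s(u2, a) := sym2_ne (fun h _ => ha2 h) (fun _ h => hb2 h)
  have n24 : s(a, b) ≠ s(b, u1) := sym2_ne (fun h _ => hab h) (fun h _ => ha1 h)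
  have n25 : s(a, b) ≠ s(c, u2) := sym2_ne (fun _ h => hb2 h) (fun h _ => ha2 h)
  have n26 : s(a, b) ≠ s(u1, c) := sym2_ne (fun h _ => ha1 h) (fun _ h => hb1 h)
  have n27 : s(a, b) ≠ s(u2, b) := sym2_ne (fun h _ => ha2 h) (fun _ h => hb2 h)
  have n43 : s(b, u1) ≠ s(u2, a) := sym2_ne (fun h _ => hb2 h) (fun _ h => hu.ne' h)
  have n45 : s(b, u1) ≠ s(c, u2) := sym2_ne (fun _ h => hu.ne' h) (fun h _ => hb2 h)
  have n46 : s(b, u1) ≠ s(u1, c) := sym2_ne (fun h _ => hb1 h) (fun h _ => hcb h.symm)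
  have n47 : s(b, u1) ≠ s(u2, b) := sym2_ne (fun h _ => hb2 h) (fun _ h => hu.ne' h)
  have n53 : s(c, u2) ≠ s(u2, a) := sym2_ne (fun h _ => hc2' h) (fun h _ => hca h)
  have n56 : s(c, u2) ≠ s(u1, c) := sym2_ne (fun h _ => hc1 h) (fun _ h => hu.ne h)
  have n57 : s(c, u2) ≠ s(u2, b) := sym2_ne (fun h _ => hc2' h) (fun h _ => hcb h)
  have n63 : s(u1, c) ≠ s(u2, a) := sym2_ne (fun h _ => hu.ne' h) (fun h _ => ha1 h.symm)
  have n67 : s(u1, c) ≠ s(u2, b) := sym2_ne (fun h _ => hu.ne' h) (fun h _ => hb1 h.symm)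
  -- the two admissible steps
  have hG1e4 : G1 s(b, u1) = G s(b, u1) + 1 := by
    have h := ev1 s(b, u1)
    rw [if_neg (Ne.symm np4), if_neg (Ne.symm n24), if_neg n43, if_pos rfl] at h
    omega
  have hG1e5 : G1 s(c, u2) = G s(c, u2) := by
    have h := ev1 s(c, u2)
    rw [if_neg (Ne.symm np5), if_neg (Ne.symm n25), if_neg n53, if_neg (Ne.symm n45)] at h
    omega
  have hstep1 : AdmissibleStep G G1 :=
    ⟨u1, u2, a, b, ⟨ha1.symm, hb1.symm, ha2.symm, hb2.symm⟩, by omega, heab,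
      Or.inr (Or.inr (Or.inl h2)), rfl⟩
  have hstep2 : AdmissibleStep G1 G2 :=
    ⟨b, u1, c, u2, ⟨hcb.symm, hb2, hc1.symm, hu.ne'⟩, by omega, by omega,
      Or.inr (Or.inr (Or.inl (by omega))), rfl⟩
  -- the value at the top pair decreases by one
  have hG1p : G1 s(u1, u2) = G s(u1, u2) - 1 := by
    have h := ev1 s(u1, u2)
    rw [if_pos rfl, if_neg np2, if_neg np3, if_neg np4] at h
    omega
  have hdp : G2 s(u1, u2) + 1 = G s(u1, u2) := by
    have h := ev2 s(u1, u2)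
    rw [if_neg np4, if_neg np5, if_neg np6, if_neg np7] at h
    omega
  have hother : ∀ q, q ≠ s(u1, u2) → NonSimpleAt G2 q → PairLT q s(u1, u2) := by
    intro q hqp hns
    by_cases h2q : q = s(a, b)
    · subst h2q
      have hval : G2 s(a, b) ≤ G s(a, b) := by
        have h := ev2 s(a, b)
        have h' := ev1 s(a, b)
        rw [if_neg n24, if_neg n25, if_neg n26, if_neg n27] at h
        rw [if_neg hqp, if_pos rfl, if_neg n23, if_neg n24] at h'
        omega
      rcases hmax.2 _ (nonsimple_mono hval hns) with h | h
      · exact absurd h hqp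
      · exact h
    by_cases h3q : q = s(u2, a)
    · subst h3q
      exact pairlt_small hu hu hasm
    by_cases h4q : q = s(b, u1)
    · subst h4q
      have hval : G2 s(b, u1) ≤ G s(b, u1) := by
        have h := ev2 s(b, u1)
        rw [if_pos rfl, if_neg n45, if_neg n46, if_neg n47] at h
        omega
      rcases hmax.2 _ (nonsimple_mono hval hns) with h | h
      · exact absurd h hqp
      · exact h
    by_cases h5q : q = s(c, u2)
    · subst h5q
      have hval : G2 s(c, u2) ≤ G s(c, u2) := by
        have h := ev2 s(c, u2)
        rw [if_neg (Ne.symm n45), if_pos rfl, if_neg n56, if_neg n57] at h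
        omega
      rcases hmax.2 _ (nonsimple_mono hval hns) with h | h
      · exact absurd h hqp
      · exact h
    by_cases h6q : q = s(u1, c)
    · subst h6q
      rcases hCc with hcc | hcc
      · exact pairlt_pin hu hcc
      · exfalso
        have hG1e6 : G1 s(u1, c) = G s(u1, c) := by
          have h := ev1 s(u1, c)
          rw [if_neg (Ne.symm np6), if_neg (Ne.symm n26), if_neg n63, if_neg (Ne.symm n46)] at h
          omega
        have hval : G2 s(u1, c) = 1 := by
          have h := ev2 s(u1, c)
          rw [if_neg (Ne.symm n46), if_neg (Ne.symm n56), if_pos rfl, if_neg n67] at h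
          omega
        exact not_nonsimple_one hval
          (by rw [Sym2.mk_isDiag_iff]; exact fun h => hc1 h.symm) hns
    by_cases h7q : q = s(u2, b)
    · subst h7q
      exact pairlt_small hu hu hbsm
    · have hval : G2 q = G q := by
        have h := ev2 q
        have h' := ev1 q
        rw [if_neg h4q, if_neg h5q, if_neg h6q, if_neg h7q] at h
        rw [if_neg hqp, if_neg h2q, if_neg h3q, if_neg h4q] at h'
        omega
      rcases hmax.2 _ (nonsimple_mono (le_of_eq hval) hns) with h | h
      · exact absurd h hqp
      · exact h
  exact hmin G2 (Relation.ReflTransGen.head hstep1 (Relation.ReflTransGen.single hstep2))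
    (graphLT_of hmax (by rw [Sym2.mk_isDiag_iff]; exact hu.ne') hdp hother)

/-- Degree counting: a small vertex `c` above `u2` with no small neighbour has a
neighbour above `u1` that is not adjacent to `u2`. -/
private lemma counting1 [Fintype V] {G : Multigraph V} (hlf : LoopFree G)
    (hord : ∀ u v : V, mdeg G u < mdeg G v → u < v)
    {u1 u2 c : V} (hmax : MaxNonSimple G s(u1, u2)) (hu : u2 < u1)
    (hcs : c < u1) (hbc : u2 < c)
    (hns : ∀ d, d ≠ u1 → d ≠ u2 → d < u1 → G s(c, d) = 0) :
    ∃ w, u1 < w ∧ 1 ≤ G s(c, w) ∧ G s(u2, w) = 0 := by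
  by_contra hcon
  push_neg at hcon
  have h2 : 2 ≤ G s(u1, u2) := two_le_mult hmax hu
  classical
  set S : Finset V := Finset.univ.filter (fun v => u1 < v ∧ 1 ≤ G s(c, v)) with hSdef
  have hu1S : u1 ∉ S := by simp [hSdef]
  have hu2S : u2 ∉ S := by
    simp only [hSdef, Finset.mem_filter, Finset.mem_univ, true_and, not_and]
    intro h
    exact absurd h (lt_asymm hu)
  have hcS : c ∉ S := by
    simp only [hSdef, Finset.mem_filter, Finset.mem_univ, true_and, not_and]
    intro h
    exact absurd h (lt_asymm hcs)
  have hmc : mdeg G c = G s(c, u1) + (G s(c, u2) + ∑ v ∈ S, G s(c, v)) := by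
    have e1 : mdeg G c = ∑ v : V, G s(c, v) := by simp [mdeg, hlf c]
    rw [e1, ← Finset.sum_subset (Finset.subset_univ (insert u1 (insert u2 S))) ?hz]
    · rw [Finset.sum_insert (by simp [hu.ne', hu1S]), Finset.sum_insert hu2S]
    case hz =>
      intro v _ hv
      simp only [Finset.mem_insert] at hv
      push_neg at hv
      obtain ⟨hv1, hv2, hv3⟩ := hv
      rcases lt_trichotomy v u1 with h | h | h
      · exact hns v hv1 hv2 h
      · exact absurd h hv1
      · by_contra hzz
        exact hv3 (by
          simp only [hSdef, Finset.mem_filter, Finset.mem_univ, true_and]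
          exact ⟨h, Nat.one_le_iff_ne_zero.mpr hzz⟩)
  have hb1 : G s(c, u1) ≤ 1 := cap_mid hmax hu hbc hcs
  have hbS : ∑ v ∈ S, G s(c, v) ≤ S.card := by
    have := Finset.sum_le_card_nsmul S (fun v => G s(c, v)) 1 ?h
    · simpa using this
    case h =>
      intro v hv
      simp only [hSdef, Finset.mem_filter, Finset.mem_univ, true_and] at hv
      exact cap_big hmax hu (lt_of_lt_of_le hv.1 (le_max_right c v))
  have hl : G s(u1, u2) + (G s(c, u2) + S.card) ≤ mdeg G u2 := by
    have e1 : ∑ v ∈ insert u1 (insert c S), G s(u2, v)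
        = G s(u2, u1) + (G s(u2, c) + ∑ v ∈ S, G s(u2, v)) := by
      rw [Finset.sum_insert (by simp [hcs.ne', hu1S]), Finset.sum_insert hcS]
    have e2 : S.card ≤ ∑ v ∈ S, G s(u2, v) := by
      have := Finset.card_nsmul_le_sum S (fun v => G s(u2, v)) 1 ?h
      · simpa using this
      case h =>
        intro v hv
        simp only [hSdef, Finset.mem_filter, Finset.mem_univ, true_and] at hv
        have := hcon v hv.1 hv.2
        show 1 ≤ G s(u2, v)
        omega
    have e3 : ∑ v ∈ insert u1 (insert c S), G s(u2, v) ≤ mdeg G u2 := by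
      calc ∑ v ∈ insert u1 (insert c S), G s(u2, v)
          ≤ ∑ v : V, G s(u2, v) := Finset.sum_le_sum_of_subset (Finset.subset_univ _)
        _ ≤ mdeg G u2 := Nat.le_add_right _ _
    have eq1 : G s(u2, u1) = G s(u1, u2) := by rw [Sym2.eq_swap]
    have eq2 : G s(u2, c) = G s(c, u2) := by rw [Sym2.eq_swap]
    omega
  have hcmp : mdeg G u2 ≤ mdeg G c := by
    by_contra hx
    exact absurd (hord _ _ (not_le.mp hx)) (lt_asymm hbc)
  omega

/-- Degree counting: a vertex `w` above `u1` adjacent to `u1` has a neighbour `z`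
(other than `u1`, `u2`) which is below `u2` or not adjacent to `u1`. -/
private lemma counting2 [Fintype V] {G : Multigraph V} (hlf : LoopFree G)
    (hord : ∀ u v : V, mdeg G u < mdeg G v → u < v)
    {u1 u2 w : V} (hmax : MaxNonSimple G s(u1, u2)) (hu : u2 < u1) (hw : u1 < w)
    (hwu1 : 1 ≤ G s(u1, w)) :
    ∃ z, z ≠ u1 ∧ z ≠ u2 ∧ 1 ≤ G s(w, z) ∧ (z < u2 ∨ G s(u1, z) = 0) := by
  by_contra hcon
  push_neg at hcon
  have h2 : 2 ≤ G s(u1, u2) := two_le_mult hmax hu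
  classical
  set T : Finset V := Finset.univ.filter (fun z => z ≠ u1 ∧ z ≠ u2 ∧ 1 ≤ G s(w, z)) with hT
  have hu1T : u1 ∉ T := by simp [hT]
  have hu2T : u2 ∉ T := by simp [hT]
  have hwT : w ∉ T := by
    simp only [hT, Finset.mem_filter, Finset.mem_univ, true_and, not_and]
    intro _ _
    simp [hlf w]
  have hmw : mdeg G w = G s(w, u1) + (G s(w, u2) + ∑ z ∈ T, G s(w, z)) := by
    have e1 : mdeg G w = ∑ v : V, G s(w, v) := by simp [mdeg, hlf w]
    rw [e1, ← Finset.sum_subset (Finset.subset_univ (insert u1 (insert u2 T))) ?hz]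
    · rw [Finset.sum_insert (by simp [hu.ne', hu1T]), Finset.sum_insert hu2T]
    case hz =>
      intro v _ hv
      simp only [Finset.mem_insert] at hv
      push_neg at hv
      obtain ⟨hv1, hv2, hv3⟩ := hv
      by_contra hzz
      exact hv3 (by
        simp only [hT, Finset.mem_filter, Finset.mem_univ, true_and]
        exact ⟨hv1, hv2, Nat.one_le_iff_ne_zero.mpr hzz⟩)
  have hbw1 : G s(w, u1) ≤ 1 := cap_big hmax hu (lt_of_lt_of_le hw (le_max_left w u1))
  have hbw2 : G s(w, u2) ≤ 1 := cap_big hmax hu (lt_of_lt_of_le hw (le_max_left w u2))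
  have hbT : ∑ z ∈ T, G s(w, z) ≤ T.card := by
    have := Finset.sum_le_card_nsmul T (fun z => G s(w, z)) 1 ?h
    · simpa using this
    case h =>
      intro z _
      exact cap_big hmax hu (lt_of_lt_of_le hw (le_max_left w z))
  have hlow : G s(u1, u2) + (G s(u1, w) + T.card) ≤ mdeg G u1 := by
    have e1 : ∑ v ∈ insert u2 (insert w T), G s(u1, v)
        = G s(u1, u2) + (G s(u1, w) + ∑ z ∈ T, G s(u1, z)) := by
      rw [Finset.sum_insert (by simp [(hu.trans hw).ne, hu2T]), Finset.sum_insert hwT]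
    have e2 : T.card ≤ ∑ z ∈ T, G s(u1, z) := by
      have := Finset.card_nsmul_le_sum T (fun z => G s(u1, z)) 1 ?h
      · simpa using this
      case h =>
        intro z hz
        simp only [hT, Finset.mem_filter, Finset.mem_univ, true_and] at hz
        have := (hcon z hz.1 hz.2.1 hz.2.2).2
        show 1 ≤ G s(u1, z)
        omega
    have e3 : ∑ v ∈ insert u2 (insert w T), G s(u1, v) ≤ mdeg G u1 := by
      calc ∑ v ∈ insert u2 (insert w T), G s(u1, v)
          ≤ ∑ v : V, G s(u1, v) := Finset.sum_le_sum_of_subset (Finset.subset_univ _)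
        _ ≤ mdeg G u1 := Nat.le_add_right _ _
    omega
  have hcmp : mdeg G u1 ≤ mdeg G w := by
    by_contra hx
    exact absurd (hord _ _ (not_le.mp hx)) (lt_asymm hw)
  omega

end Aux

/-- Lemma 8: if the graph contains an edge between two small vertices,
then every small vertex adjacent to u2 is adjacent to some small vertex. -/
theorem small_neighbour_of_u2_has_small_neighbour [Fintype V] [LinearOrder V]
    (G : Multigraph V) (hlf : LoopFree G)
    (hord : ∀ u v : V, mdeg G u < mdeg G v → u < v)
    (hmin : ∀ G' : Multigraph V, Relation.ReflTransGen AdmissibleStep G G' → ¬ GraphLT G' G)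
    (u1 u2 : V) (hmax : MaxNonSimple G s(u1, u2)) (hu : u2 < u1)
    (hsmalledge : ∃ a b : V, a ≠ u1 ∧ a ≠ u2 ∧ a < u1 ∧ b ≠ u1 ∧ b ≠ u2 ∧ b < u1 ∧
      1 ≤ G s(a, b))
    (c : V) (hcu1 : c ≠ u1) (hcu2 : c ≠ u2) (hcsmall : c < u1)
    (hc2 : 1 ≤ G s(c, u2)) :
    ∃ d : V, d ≠ u1 ∧ d ≠ u2 ∧ d < u1 ∧ 1 ≤ G s(c, d) := by
  by_contra hno
  push_neg at hno
  have hns : ∀ d, d ≠ u1 → d ≠ u2 → d < u1 → G s(c, d) = 0 := by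
    intro d h1 h3 h4
    have := hno d h1 h3 h4
    omega
  obtain ⟨a, b, ha1, ha2, hasm, hb1, hb2, hbsm, hab⟩ := hsmalledge
  have hane : a ≠ b := by
    intro h
    subst h
    rw [hlf a] at hab
    omega
  have hca : c ≠ a := by
    intro h
    subst h
    rw [hns b hb1 hb2 hbsm] at hab
    omega
  have hcb : c ≠ b := by
    intro h
    subst h
    have : G s(c, a) = G s(a, c) := by rw [Sym2.eq_swap]
    rw [hns a ha1 ha2 hasm] at this
    rw [← this] at hab
    omega
  by_cases hCc : c < u2 ∨ G s(u1, c) = 0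
  · -- Case A: `c` is a usable receiver for the edge at `u1`.
    by_cases hCb : b < u2 ∨ G s(u1, b) = 0
    · exact key hmin hmax hu ha1 ha2 hb1 hb2 hane hab (Or.inl hasm) hCb
    · by_cases hCa : a < u2 ∨ G s(u1, a) = 0
      · exact key hmin hmax hu hb1 hb2 ha1 ha2 hane.symm
          (by rw [Sym2.eq_swap]; exact hab) (Or.inl hbsm) hCa
      · push_neg at hCb
        have hbu1 : 1 ≤ G s(b, u1) := by
          have : G s(b, u1) = G s(u1, b) := by rw [Sym2.eq_swap]
          rw [this]
          omega
        exact key2 hmin hmax hu ha1 ha2 hb1 hb2 hcu1 hcu2 hasm hbsm hane hca hcb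
          hab hc2 hbu1 hCc
  · -- Case B: `c > u2` and `c` is adjacent to `u1`; use the counting lemmas.
    push_neg at hCc
    have hbc : u2 < c := lt_of_le_of_ne hCc.1 (Ne.symm hcu2)
    obtain ⟨w, hw, hcw, hu2w⟩ := counting1 hlf hord hmax hu hcsmall hbc hns
    by_cases hG : G s(u1, w) = 0
    · exact key hmin hmax hu hcu1 hcu2 hw.ne' (hu.trans hw).ne'
        (hcsmall.trans hw).ne hcw (Or.inl hcsmall) (Or.inr hG)
    · have hwu1 : 1 ≤ G s(u1, w) := Nat.one_le_iff_ne_zero.mpr hG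
      obtain ⟨z, hz1, hz2, hwz, hCz⟩ := counting2 hlf hord hmax hu hw hwu1
      have hwz' : w ≠ z := by
        intro h
        subst h
        rw [hlf w] at hwz
        omega
      exact key hmin hmax hu hw.ne' (hu.trans hw).ne' hz1 hz2 hwz' hwz
        (Or.inr hu2w) hCz
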